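/- arXiv:1412.8468 — 2 statements merged into one kernel-verified Lean document; each statement's English description precedes it below -/
import Mathlib

section
/- Every orthomorphism of a Dedekind complete vector lattice E is order continuous: if a net (x_α) decreases to 0 in E, then inf_α |T x_α| = 0. -/
/-!
Let `inf_i x_i = 0`, `u := x_{i₀}` and `0 ≤ y ≤ |T x_i|` for all `i`. Order boundedness gives
`|T z| ≤ w` for `0 ≤ z ≤ u`. Splitting `n x_i = (n x_i ⊓ u) + (n x_i - u)⁺` yields
`a := (n y - w)⁺ ≤ |T (n x_i - u)⁺|`, which is disjoint from `(u - n x_i)⁺` because `T` preserves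
bands. Hence `a ⊓ u ≤ n x_i` for every `i`, and `inf_i n x_i = 0` gives `a ⊥ u`, so
`a ⊥ |T u| ≥ y` and then `a ⊥ n y`. Together with `n y ≤ a + w` this forces `n y ≤ w` for all
`n`, and Dedekind completeness (through the Archimedean property) gives `y = 0`.
-/

section Orth

variable {E : Type*} [Lattice E] [AddCommGroup E]
  [CovariantClass E E (· + ·) (· ≤ ·)] [Module ℝ E]

/-- Order boundedness of a linear endomorphism. -/
def OrdBounded (T : E →ₗ[ℝ] E) : Prop :=
  ∀ a b : E, ∃ c d : E, ∀ x : E, x ∈ Set.Icc a b → T x ∈ Set.Icc c d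

/-- An orthomorphism: an order bounded, band-preserving linear endomorphism. -/
def IsOrthomorphism (T : E →ₗ[ℝ] E) : Prop :=
  OrdBounded T ∧
  ∀ x y : E, (x ⊔ -x) ⊓ (y ⊔ -y) = 0 → ((T x) ⊔ -(T x)) ⊓ (y ⊔ -y) = 0

section LatticeOrderedGroup

variable {G : Type*} [Lattice G] [AddCommGroup G] [AddLeftMono G] {a b c t w : G}

theorem inf_add_le_inf_add_inf (ha : 0 ≤ a) (hb : 0 ≤ b) (hc : 0 ≤ c) :
    a ⊓ (b + c) ≤ a ⊓ b + a ⊓ c := by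
  rw [add_inf, inf_add, inf_add]
  refine le_inf (le_inf ?_ ?_) (le_inf ?_ inf_le_right)
  · exact inf_le_left.trans (le_add_of_nonneg_right ha)
  · exact inf_le_left.trans (le_add_of_nonneg_left hb)
  · exact inf_le_left.trans (le_add_of_nonneg_right hc)

theorem inf_nsmul_le_nsmul_inf (ha : 0 ≤ a) (hb : 0 ≤ b) (n : ℕ) :
    a ⊓ n • b ≤ n • (a ⊓ b) := by
  induction n with
  | zero => simp
  | succ n ih =>
    calc a ⊓ (n + 1) • b ≤ a ⊓ n • b + a ⊓ b := by
          rw [succ_nsmul]; exact inf_add_le_inf_add_inf ha (nsmul_nonneg hb n) hb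
      _ ≤ n • (a ⊓ b) + a ⊓ b := add_le_add_left ih _
      _ = (n + 1) • (a ⊓ b) := (succ_nsmul _ n).symm

theorem inf_nsmul_eq_zero (ha : 0 ≤ a) (hb : 0 ≤ b) (h : a ⊓ b = 0) (n : ℕ) :
    a ⊓ n • b = 0 :=
  le_antisymm ((inf_nsmul_le_nsmul_inf ha hb n).trans_eq (by rw [h, nsmul_zero]))
    (le_inf ha (nsmul_nonneg hb n))

theorem nsmul_inf_nsmul_eq_zero (ha : 0 ≤ a) (hb : 0 ≤ b) (h : a ⊓ b = 0) (m n : ℕ) :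
    m • a ⊓ n • b = 0 := by
  have hbma : b ⊓ m • a = 0 := by rw [inf_comm] at h; exact inf_nsmul_eq_zero hb ha h m
  rw [inf_comm] at hbma
  exact inf_nsmul_eq_zero (nsmul_nonneg ha m) hb hbma n

theorem abs_sub_eq_add_of_inf_eq_zero (h : a ⊓ b = 0) : |a - b| = a + b := by
  rw [← sup_sub_inf_eq_abs_sub, inf_comm, h, sub_zero, sup_comm, ← inf_add_sup, h, zero_add]

theorem abs_nsmul_eq_nsmul_abs (n : ℕ) (a : G) : |n • a| = n • |a| := by
  have hdisj := nsmul_inf_nsmul_eq_zero (posPart_nonneg a) (negPart_nonneg a)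
    (posPart_inf_negPart_eq_zero a) n n
  rw [← posPart_sub_negPart a, nsmul_sub, abs_sub_eq_add_of_inf_eq_zero hdisj, ← nsmul_add,
    posPart_sub_negPart, posPart_add_negPart]

theorem nonpos_of_nsmul_nonpos [IsAddTorsionFree G] {n : ℕ} (hn : n ≠ 0) (h : n • a ≤ 0) :
    a ≤ 0 := by
  have hdisj := nsmul_inf_nsmul_eq_zero (posPart_nonneg a) (negPart_nonneg a)
    (posPart_inf_negPart_eq_zero a) n n
  have hle : n • a⁺ ≤ n • a⁻ := by
    rwa [← sub_nonpos, ← nsmul_sub, posPart_sub_negPart]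
  have hzero : n • a⁺ = n • (0 : G) := by rw [nsmul_zero, ← hdisj, inf_eq_left.2 hle]
  exact posPart_eq_zero.1 (IsAddTorsionFree.nsmul_right_injective hn hzero)

theorem inf_le_of_inf_posPart_sub_eq_zero (ha : 0 ≤ a) (hb : 0 ≤ b) (hc : 0 ≤ c)
    (h : a ⊓ (b - c)⁺ = 0) : a ⊓ b ≤ c :=
  calc a ⊓ b = a ⊓ ((b - c)⁺ + b ⊓ c) := by rw [inf_eq_sub_posPart_sub b c, add_sub_cancel]
    _ ≤ a ⊓ (b - c)⁺ + a ⊓ (b ⊓ c) :=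
      inf_add_le_inf_add_inf ha (posPart_nonneg _) (le_inf hb hc)
    _ ≤ c := by rw [h, zero_add]; exact inf_le_right.trans inf_le_right

theorem le_of_le_add_of_inf_eq_zero (ht : 0 ≤ t) (ha : 0 ≤ a) (hw : 0 ≤ w) (h : t ≤ a + w)
    (hat : a ⊓ t = 0) : t ≤ w :=
  calc t = t ⊓ (a + w) := (inf_eq_left.2 h).symm
    _ ≤ t ⊓ a + t ⊓ w := inf_add_le_inf_add_inf ht ha hw
    _ ≤ w := by rw [inf_comm, hat, zero_add]; exact inf_le_right

theorem nonpos_of_forall_nsmul_le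
    (hDC : ∀ s : Set G, s.Nonempty → BddAbove s → ∃ a, IsLUB s a) (h : ∀ n : ℕ, n • a ≤ b) :
    a ≤ 0 := by
  obtain ⟨s, hs⟩ := hDC (Set.range fun n : ℕ => n • a) ⟨0, 0, zero_nsmul a⟩
    ⟨b, by rintro _ ⟨n, rfl⟩; exact h n⟩
  have hle : s ≤ s - a := hs.2 <| by
    rintro _ ⟨n, rfl⟩
    exact le_sub_iff_add_le.2 (by simpa only [succ_nsmul] using hs.1 ⟨n + 1, rfl⟩)
  simpa using hle

end LatticeOrderedGroup

theorem isGLB_range_nsmul {ι : Type*} {x : ι → E} (hx : IsGLB (Set.range x) 0) {n : ℕ}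
    (hn : n ≠ 0) : IsGLB (Set.range fun i => n • x i) 0 := by
  have : IsAddTorsionFree E := .of_isTorsionFree ℝ E
  refine ⟨?_, fun b hb => ?_⟩
  · rintro _ ⟨i, rfl⟩
    exact nsmul_nonneg (hx.1 ⟨i, rfl⟩) n
  have hb' : b = n • ((n : ℝ)⁻¹ • b) := by
    rw [← Nat.cast_smul_eq_nsmul ℝ, smul_smul, mul_inv_cancel₀ (Nat.cast_ne_zero.2 hn), one_smul]
  have hle : (n : ℝ)⁻¹ • b ≤ 0 := hx.2 <| by
    rintro _ ⟨i, rfl⟩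
    refine sub_nonpos.1 (nonpos_of_nsmul_nonpos hn ?_)
    rw [nsmul_sub, ← hb', sub_nonpos]
    exact hb ⟨i, rfl⟩
  rw [hb']
  exact nsmul_nonpos hle n

theorem OrdBounded.exists_abs_le {T : E →ₗ[ℝ] E} (hT : OrdBounded T) (a b : E) :
    ∃ w, ∀ z ∈ Set.Icc a b, |T z| ≤ w := by
  obtain ⟨c, d, h⟩ := hT a b
  exact ⟨d ⊔ -c, fun z hz =>
    abs_le'.2 ⟨(h z hz).2.trans le_sup_left, (neg_le_neg_iff.2 (h z hz).1).trans le_sup_right⟩⟩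

namespace IsOrthomorphism

variable {T : E →ₗ[ℝ] E}

theorem abs_apply_inf_eq_zero (hT : IsOrthomorphism T) {v z : E} (hv : 0 ≤ v) (hz : 0 ≤ z)
    (h : v ⊓ z = 0) : |T v| ⊓ z = 0 := by
  have habs : |T v| ⊓ |z| = 0 := hT.2 v z (show |v| ⊓ |z| = 0 by
    rwa [abs_of_nonneg hv, abs_of_nonneg hz])
  rwa [abs_of_nonneg hz] at habs

theorem posPart_sub_inf_posPart_sub_eq_zero (hT : IsOrthomorphism T) {s u t w : E}
    (ht : t ≤ |T s|) (hw : |T (s ⊓ u)| ≤ w) : (t - w)⁺ ⊓ (u - s)⁺ = 0 := by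
  have hsplit : |T s| ≤ w + |T (s - u)⁺| :=
    calc |T s| = |T (s ⊓ u) + T (s - u)⁺| := by
          rw [← map_add, inf_eq_sub_posPart_sub, sub_add_cancel]
      _ ≤ |T (s ⊓ u)| + |T (s - u)⁺| := abs_add_le _ _
      _ ≤ w + |T (s - u)⁺| := add_le_add_left hw _
  have hle : (t - w)⁺ ≤ |T (s - u)⁺| :=
    sup_le (sub_le_iff_le_add'.2 (ht.trans hsplit)) (abs_nonneg _)
  have hdisj : |T (s - u)⁺| ⊓ (u - s)⁺ = 0 := by
    refine hT.abs_apply_inf_eq_zero (posPart_nonneg _) (posPart_nonneg _) ?_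
    rw [← neg_sub s u, posPart_neg, posPart_inf_negPart_eq_zero]
  exact le_antisymm ((inf_le_inf_right _ hle).trans hdisj.le)
    (le_inf (posPart_nonneg _) (posPart_nonneg _))

theorem nsmul_le_of_forall_le_abs (hT : IsOrthomorphism T) {ι : Type*} {x : ι → E}
    (hx : IsGLB (Set.range x) 0) {u y w : E} (hu : 0 ≤ u) (hy : 0 ≤ y) (hyu : y ≤ |T u|)
    (hyx : ∀ i, y ≤ |T (x i)|) (hw : ∀ z ∈ Set.Icc 0 u, |T z| ≤ w) (n : ℕ) : n • y ≤ w := by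
  have hw0 : 0 ≤ w := by simpa using hw 0 ⟨le_rfl, hu⟩
  rcases Nat.eq_zero_or_pos n with rfl | hn
  · simpa using hw0
  set a := (n • y - w)⁺
  have hau : a ⊓ u = 0 := by
    refine le_antisymm ((isGLB_range_nsmul hx hn.ne').2 ?_) (le_inf (posPart_nonneg _) hu)
    rintro _ ⟨i, rfl⟩
    have hxi : 0 ≤ n • x i := nsmul_nonneg (hx.1 ⟨i, rfl⟩) n
    refine inf_le_of_inf_posPart_sub_eq_zero (posPart_nonneg _) hu hxi ?_
    refine hT.posPart_sub_inf_posPart_sub_eq_zero ?_ (hw _ ⟨le_inf hxi hu, inf_le_right⟩)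
    calc n • y ≤ n • |T (x i)| := nsmul_le_nsmul_right (hyx i) n
      _ = |T (n • x i)| := by rw [map_nsmul, abs_nsmul_eq_nsmul_abs]
  have hay : a ⊓ y = 0 := by
    refine le_antisymm ?_ (le_inf (posPart_nonneg _) hy)
    calc a ⊓ y ≤ a ⊓ |T u| := inf_le_inf_left a hyu
      _ = 0 := by
        rw [inf_comm]
        exact hT.abs_apply_inf_eq_zero hu (posPart_nonneg _) (by rwa [inf_comm])
  exact le_of_le_add_of_inf_eq_zero (nsmul_nonneg hy n) (posPart_nonneg _) hw0
    (sub_le_iff_le_add.1 (le_posPart _)) (inf_nsmul_eq_zero (posPart_nonneg _) hy hay n)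

end IsOrthomorphism

theorem stmt_10_general
    (hDC : ∀ s : Set E, s.Nonempty → BddAbove s → ∃ a, IsLUB s a)
    (T : E →ₗ[ℝ] E) (hT : IsOrthomorphism T)
    {ι : Type*} (x : ι → E)
    (hinf : IsGLB (Set.range x) 0) :
    IsGLB (Set.range fun i => (T (x i)) ⊔ -(T (x i))) 0 := by
  rcases isEmpty_or_nonempty ι with hι | ⟨⟨i₀⟩⟩
  · simpa [Set.range_eq_empty] using hinf
  refine ⟨?_, fun b hb => ?_⟩
  · rintro _ ⟨i, rfl⟩
    exact abs_nonneg _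
  have hyx : ∀ i, b⁺ ≤ |T (x i)| := fun i => sup_le (hb ⟨i, rfl⟩) (abs_nonneg _)
  obtain ⟨w, hw⟩ := hT.1.exists_abs_le 0 (x i₀)
  refine (le_posPart b).trans (nonpos_of_forall_nsmul_le (b := w) hDC fun n => ?_)
  exact hT.nsmul_le_of_forall_le_abs hinf (hinf.1 ⟨i₀, rfl⟩) (posPart_nonneg b) (hyx i₀) hyx hw n

/-- every orthomorphism of a Dedekind complete vector lattice is
order continuous: if a (decreasing) net `(x_α)` has infimum `0`, then
`inf_α |T x_α| = 0`. -/
theorem stmt_10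
    (hDC : ∀ s : Set E, s.Nonempty → BddAbove s → ∃ a, IsLUB s a)
    (T : E →ₗ[ℝ] E) (hT : IsOrthomorphism T)
    {ι : Type*} [Preorder ι] [Nonempty ι] (hdir : DirectedOn (· ≤ ·) (Set.univ : Set ι))
    (x : ι → E) (hmono : ∀ i j : ι, i ≤ j → x j ≤ x i)
    (hinf : IsGLB (Set.range x) 0) :
    IsGLB (Set.range fun i => (T (x i)) ⊔ -(T (x i))) 0 :=
  stmt_10_general hDC T hT x hinf

end Orth
end

section
/- Let X be a real vector space, E a Dedekind complete vector lattice, and f : X → E quasidifferentiable at x₀ with directional derivative f'(x₀) = p − q, where p, q : X → E are sublinear. If x₀ is a local minimum of f in the algebraic sense (there is an absorbing set U with f(x₀) ≤ f(x) for all x ∈ x₀ + U), then q(h) ≤ p(h) for all h ∈ X, i.e., f'(x₀)h ≥ 0 for all directions h. -/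
section QDmin

variable {X E : Type*} [AddCommGroup X] [Module ℝ X]
  [Lattice E] [AddCommGroup E] [CovariantClass E E (· + ·) (· ≤ ·)] [Module ℝ E]

/-- A sublinear operator: subadditive and positively homogeneous. -/
def Sublinear (p : X → E) : Prop :=
  (∀ x y : X, p (x + y) ≤ p x + p y) ∧
  (∀ (l : ℝ), 0 ≤ l → ∀ x : X, p (l • x) = l • p x)

/-- The difference quotient of `f` at `x₀` in direction `h`. -/
noncomputable def diffQuot (f : X → E) (x₀ h : X) (a : ℝ) : E :=
  a⁻¹ • (f (x₀ + a • h) - f x₀)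

/-- `d` is the Dini (one-sided directional) derivative of `f` at `x₀` in direction `h`. -/
def HasDiniDerivAt (f : X → E) (x₀ h : X) (d : E) : Prop :=
  IsGLB {s : E | ∃ ε > (0 : ℝ), IsLUB (diffQuot f x₀ h '' Set.Ioo 0 ε) s} d ∧
  IsLUB {s : E | ∃ ε > (0 : ℝ), IsGLB (diffQuot f x₀ h '' Set.Ioo 0 ε) s} d

/-- An (algebraically) absorbing subset of `X`: each point has all sufficiently small
positive multiples inside the set (`0 ∈ core U`). -/
def Absorbing (U : Set X) : Prop :=
  ∀ x : X, ∃ ε > (0 : ℝ), ∀ t : ℝ, 0 < t → t < ε → t • x ∈ U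

/-! At `t = 1/n` the difference quotient is `n • (f (x₀ + t • h) - f x₀)`, a natural multiple of
an element that is nonnegative by minimality; natural multiples matter because the order of `E`
is only assumed compatible with addition, not with real scalars. Hence every supremum of
difference quotients over `(0, ε')` is nonnegative, and so is their infimum `p h - q h`. -/

omit [Lattice E] [CovariantClass E E (· + ·) (· ≤ ·)] in
lemma diffQuot_inv_natCast (f : X → E) (x₀ h : X) (n : ℕ) :
    diffQuot f x₀ h (n : ℝ)⁻¹ = n • (f (x₀ + (n : ℝ)⁻¹ • h) - f x₀) := by
  rw [diffQuot, inv_inv, Nat.cast_smul_eq_nsmul]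

lemma nonneg_of_mem_upperBounds_diffQuot {f : X → E} {x₀ h : X} {ε ε' : ℝ} {s : E}
    (hε : 0 < ε) (hmin : ∀ t ∈ Set.Ioo 0 ε, f x₀ ≤ f (x₀ + t • h)) (hε' : 0 < ε')
    (hs : s ∈ upperBounds (diffQuot f x₀ h '' Set.Ioo 0 ε')) : 0 ≤ s := by
  obtain ⟨n, hn⟩ := exists_nat_one_div_lt (lt_min hε hε')
  have ht : ((n + 1 : ℕ) : ℝ)⁻¹ ∈ Set.Ioo 0 (min ε ε') :=
    ⟨by positivity, by simpa only [Nat.cast_succ, one_div] using hn⟩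
  calc (0 : E) ≤ (n + 1) • (f (x₀ + ((n + 1 : ℕ) : ℝ)⁻¹ • h) - f x₀) :=
        nsmul_nonneg (sub_nonneg.2 (hmin _ ⟨ht.1, ht.2.trans_le (min_le_left _ _)⟩)) _
    _ = diffQuot f x₀ h ((n + 1 : ℕ) : ℝ)⁻¹ := (diffQuot_inv_natCast f x₀ h (n + 1)).symm
    _ ≤ s := hs ⟨_, ⟨ht.1, ht.2.trans_le (min_le_right _ _)⟩, rfl⟩

lemma HasDiniDerivAt.nonneg {f : X → E} {x₀ h : X} {d : E} (hd : HasDiniDerivAt f x₀ h d)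
    {ε : ℝ} (hε : 0 < ε) (hmin : ∀ t ∈ Set.Ioo 0 ε, f x₀ ≤ f (x₀ + t • h)) : 0 ≤ d :=
  hd.1.2 fun _ ⟨_, hε', hs⟩ ↦ nonneg_of_mem_upperBounds_diffQuot hε hmin hε' hs.1

theorem stmt_17_general
    (f : X → E) (x₀ : X) (p q : X → E)
    (hderiv : ∀ h : X, HasDiniDerivAt f x₀ h (p h - q h))
    (hmin : ∃ U : Set X, Absorbing U ∧ ∀ u ∈ U, f x₀ ≤ f (x₀ + u)) :
    ∀ h : X, q h ≤ p h := by
  obtain ⟨U, hU, hUmin⟩ := hmin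
  intro h
  obtain ⟨ε, hε, hεU⟩ := hU h
  exact sub_nonneg.1 <| (hderiv h).nonneg hε fun t ht ↦ hUmin _ (hεU t ht.1 ht.2)

/-- if `f` is quasidifferentiable at `x₀` with `f'(x₀) = p − q`
(`p, q` sublinear) and `x₀` is an algebraic local minimum of `f`, then
`q(h) ≤ p(h)`, i.e. `f'(x₀)h ≥ 0`, for every direction `h`. -/
theorem stmt_17
    (hDC : ∀ s : Set E, s.Nonempty → BddAbove s → ∃ a, IsLUB s a)
    (f : X → E) (x₀ : X) (p q : X → E)
    (hp : Sublinear p) (hq : Sublinear q)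
    (hderiv : ∀ h : X, HasDiniDerivAt f x₀ h (p h - q h))
    (hmin : ∃ U : Set X, Absorbing U ∧ ∀ u ∈ U, f x₀ ≤ f (x₀ + u)) :
    ∀ h : X, q h ≤ p h :=
  stmt_17_general f x₀ p q hderiv hmin

end QDmin
end
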